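/- Let m ≥ 1, N := 2m, p, q ≥ 0, and let G be the N×N matrix of the (expected) planted-partition network with two groups of size m: G_{ij} = p if i and j belong to the same group and G_{ij} = q otherwise. Let λ ≥ 0, ρ := rσ² ≥ 0, set μ := m(p+q), and assume D := 1 − 2λμ + ρ(1 − λμ)² ≠ 0 and I − 2λG + ρ(I − λG)² invertible. Then the unique solution of (I − 2λG + ρ(I − λG)²)e* = 1 is e* = (1/D)·1 and the firm's maximized expected profit equals N/(2D). In particular, expected profits depend on (p,q) only through the sum p + q and not through the homophily ratio p/q. -/

import Mathlib

open Matrix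

/-! Every row of the planted-partition matrix `G` sums to `μ = m(p+q)`, so the all-ones vector
is an eigenvector of `G` with eigenvalue `μ`, hence of the polynomial `I - 2λG + ρ(I - λG)²` in `G`
with eigenvalue `D`. Invertibility of that matrix makes `(1/D)·1` the only solution. -/

section EffortMatrix

variable {ι R : Type*} [Fintype ι] [DecidableEq ι] [CommRing R]

theorem one_sub_smul_mulVec_of_mulVec_eq_smul {A : Matrix ι ι R} {v : ι → R} {a : R}
    (hA : A *ᵥ v = a • v) (l : R) : (1 - l • A) *ᵥ v = (1 - l * a) • v := by
  rw [sub_mulVec, one_mulVec, smul_mulVec, hA, smul_smul, sub_smul, one_smul]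

theorem effort_mulVec_of_mulVec_eq_smul {A : Matrix ι ι R} {v : ι → R} {a : R}
    (hA : A *ᵥ v = a • v) (c l ρ : R) :
    (1 - c • A + ρ • (1 - l • A) ^ 2) *ᵥ v = (1 - c * a + ρ * (1 - l * a) ^ 2) • v := by
  have hB := one_sub_smul_mulVec_of_mulVec_eq_smul hA l
  rw [add_mulVec, sub_mulVec, one_mulVec, smul_mulVec, smul_mulVec, hA, sq, ← mulVec_mulVec,
    hB, mulVec_smul, hB, smul_smul, smul_smul, smul_smul]
  module

end EffortMatrix

theorem sum_fin_two_mul_ite_lt_iff (m i : ℕ) (p q : ℝ) :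
    ∑ j : Fin (2 * m), (if (i < m ↔ (j : ℕ) < m) then p else q) = m * (p + q) := by
  rw [Fin.sum_univ_eq_sum_range (fun j => if (i < m ↔ j < m) then p else q), two_mul,
    Finset.sum_range_add]
  have hlow : ∀ x ∈ Finset.range m,
      (if (i < m ↔ x < m) then p else q) = if i < m then p else q := by
    intro x hx
    simp [Finset.mem_range.1 hx]
  have hhigh : ∀ x ∈ Finset.range m,
      (if (i < m ↔ m + x < m) then p else q) = if i < m then q else p := by
    intro x _
    by_cases hi : i < m <;> simp [hi]
  rw [Finset.sum_congr rfl hlow, Finset.sum_congr rfl hhigh]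
  split_ifs <;> simp <;> ring

theorem stmt_16_general (m : ℕ) (p q lam ρ : ℝ)
    (G : Matrix (Fin (2 * m)) (Fin (2 * m)) ℝ)
    (hGdef : ∀ i j : Fin (2 * m),
      G i j = if (((i : ℕ) < m) ↔ ((j : ℕ) < m)) then p else q)
    (hD : 1 - 2 * lam * (m * (p + q)) + ρ * (1 - lam * (m * (p + q))) ^ 2 ≠ 0)
    (hinv : IsUnit ((1 : Matrix (Fin (2 * m)) (Fin (2 * m)) ℝ) - (2 * lam) • G +
      ρ • ((1 : Matrix (Fin (2 * m)) (Fin (2 * m)) ℝ) - lam • G) ^ 2)) :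
    let one : Fin (2 * m) → ℝ := fun _ => 1
    let D : ℝ := 1 - 2 * lam * (m * (p + q)) + ρ * (1 - lam * (m * (p + q))) ^ 2
    let estar : Fin (2 * m) → ℝ := (1 / D) • one
    (((1 : Matrix (Fin (2 * m)) (Fin (2 * m)) ℝ) - (2 * lam) • G +
        ρ • ((1 : Matrix (Fin (2 * m)) (Fin (2 * m)) ℝ) - lam • G) ^ 2).mulVec estar
      = one) ∧
    (∀ e : Fin (2 * m) → ℝ,
      ((1 : Matrix (Fin (2 * m)) (Fin (2 * m)) ℝ) - (2 * lam) • G +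
        ρ • ((1 : Matrix (Fin (2 * m)) (Fin (2 * m)) ℝ) - lam • G) ^ 2).mulVec e = one →
      e = estar) ∧
    (1 / 2) * (one ⬝ᵥ estar) = (2 * m : ℝ) / (2 * D) := by
  intro one D estar
  have hrow : G *ᵥ one = (m * (p + q) : ℝ) • one := by
    funext i
    simpa [one, mulVec, dotProduct, hGdef] using sum_fin_two_mul_ite_lt_iff m i p q
  have hsol : (1 - (2 * lam) • G + ρ • (1 - lam • G) ^ 2) *ᵥ estar = one := by
    rw [mulVec_smul, effort_mulVec_of_mulVec_eq_smul hrow, smul_smul, one_div,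
      inv_mul_cancel₀ hD, one_smul]
  refine ⟨hsol, fun e he => mulVec_injective_of_isUnit hinv (he.trans hsol.symm), ?_⟩
  simp only [estar, one, dotProduct, Pi.smul_apply, smul_eq_mul, mul_one, Finset.sum_const,
    Finset.card_univ, Fintype.card_fin, nsmul_eq_mul]
  push_cast
  field_simp

/-- In the (expected) planted-partition network with two groups of
size `m` (within-group intensity `p`, across-group intensity `q`), the unique
solution of `(I − 2λG + ρ(I − λG)²)e* = 1` is `e* = (1/D)·1` with
`D = 1 − 2λμ + ρ(1 − λμ)²`, `μ = m(p+q)`, and the maximized expected profit is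
`N/(2D)`: profits depend on `(p,q)` only through `p + q`. -/
theorem stmt_16 (m : ℕ) (hm : 1 ≤ m) (p q lam ρ : ℝ)
    (hp : 0 ≤ p) (hq : 0 ≤ q) (hlam : 0 ≤ lam) (hρ : 0 ≤ ρ)
    (G : Matrix (Fin (2 * m)) (Fin (2 * m)) ℝ)
    (hGdef : ∀ i j : Fin (2 * m),
      G i j = if (((i : ℕ) < m) ↔ ((j : ℕ) < m)) then p else q)
    (hD : 1 - 2 * lam * (m * (p + q)) + ρ * (1 - lam * (m * (p + q))) ^ 2 ≠ 0)
    (hinv : IsUnit ((1 : Matrix (Fin (2 * m)) (Fin (2 * m)) ℝ) - (2 * lam) • G +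
      ρ • ((1 : Matrix (Fin (2 * m)) (Fin (2 * m)) ℝ) - lam • G) ^ 2)) :
    let one : Fin (2 * m) → ℝ := fun _ => 1
    let D : ℝ := 1 - 2 * lam * (m * (p + q)) + ρ * (1 - lam * (m * (p + q))) ^ 2
    let estar : Fin (2 * m) → ℝ := (1 / D) • one
    (((1 : Matrix (Fin (2 * m)) (Fin (2 * m)) ℝ) - (2 * lam) • G +
        ρ • ((1 : Matrix (Fin (2 * m)) (Fin (2 * m)) ℝ) - lam • G) ^ 2).mulVec estar
      = one) ∧
    (∀ e : Fin (2 * m) → ℝ,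
      ((1 : Matrix (Fin (2 * m)) (Fin (2 * m)) ℝ) - (2 * lam) • G +
        ρ • ((1 : Matrix (Fin (2 * m)) (Fin (2 * m)) ℝ) - lam • G) ^ 2).mulVec e = one →
      e = estar) ∧
    (1 / 2) * (one ⬝ᵥ estar) = (2 * m : ℝ) / (2 * D) :=
  stmt_16_general m p q lam ρ G hGdef hD hinv
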